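/- arXiv:2504.05503 — 3 statements merged into one kernel-verified Lean document; each statement's English description precedes it below -/
import Mathlib

section
/- For real numbers B_x, B_y, B_z, p_par, p_perp with pi > 0 and defining |B|^2 = B_x^2 + B_y^2 + B_z^2, alpha_1 = |B|^4 - 16 pi B_x^2 p_par, Upsilon_1 = sqrt(alpha_1^2 + 8 alpha_1 (B_x^2 + 2(B_y^2 + B_z^2)) pi p_perp + 16 (B_x^4 + 8 B_x^2 (B_y^2+B_z^2) + 4 (B_y^2+B_z^2)^2) pi^2 p_perp^2), and Upsilon_2 = |B|^4 + 4 pi B_x^2 (2 p_par + p_perp) + 8 pi p_perp (B_y^2 + B_z^2), the quantity under the square root defining Upsilon_1 is nonnegative (i.e., Upsilon_1 is well-defined as a real number). -/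
open Real

/-- The radicand defining Υ₁ in the CGL magnetosonic speeds is nonnegative. -/
theorem upsilon1_radicand_nonneg (Bx By Bz ppar pperp : ℝ)
    (hpar : 0 ≤ ppar) (hperp : 0 ≤ pperp) :
    0 ≤ ((Bx^2 + By^2 + Bz^2)^2 - 16 * π * Bx^2 * ppar)^2
        + 8 * ((Bx^2 + By^2 + Bz^2)^2 - 16 * π * Bx^2 * ppar)
            * (Bx^2 + 2*(By^2 + Bz^2)) * π * pperp
        + 16 * (Bx^4 + 8*Bx^2*(By^2 + Bz^2) + 4*(By^2 + Bz^2)^2) * π^2 * pperp^2 := by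
  have key : ((Bx^2 + By^2 + Bz^2)^2 - 16 * π * Bx^2 * ppar)^2
        + 8 * ((Bx^2 + By^2 + Bz^2)^2 - 16 * π * Bx^2 * ppar)
            * (Bx^2 + 2*(By^2 + Bz^2)) * π * pperp
        + 16 * (Bx^4 + 8*Bx^2*(By^2 + Bz^2) + 4*(By^2 + Bz^2)^2) * π^2 * pperp^2
      = (((Bx^2 + By^2 + Bz^2)^2 - 16 * π * Bx^2 * ppar)
          + 4 * π * pperp * (Bx^2 + 2*(By^2 + Bz^2)))^2
        + 64 * π^2 * pperp^2 * Bx^2 * (By^2 + Bz^2) := by ring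
  rw [key]
  positivity
end

section
/- The vector R_p = (0,0,0,0, (1-b_x^2)Δp, b_x^2 Δp - |B|^2/(4 pi), B_y, B_z)^T, with Δp = p_par - p_perp and b_x = B_x/|B|, is an eigenvector of the 8×8 CGL quasilinear matrix A with eigenvalue u_x (the pressure anisotropy wave). -/
/-!
Write `A = u_x • 1 + A₀`. The vector `R_p` has no velocity components, so in `A₀ R_p` only the
momentum rows can survive, and there the anisotropic pressure force and the magnetic tension
cancel because `|B|² = B_x² + B_y² + B_z²`.
-/

open Real

/-- The quasilinear coefficient matrix of the 1-D CGL equations in primitive variables. -/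
noncomputable def cglA (ρ ux ppar pperp Bx By Bz : ℝ) : Matrix (Fin 8) (Fin 8) ℝ :=
  let B := Real.sqrt (Bx^2 + By^2 + Bz^2)
  let bx := Bx / B
  let bY := By / B
  let bz := Bz / B
  let dp := ppar - pperp
  !![ux, ρ, 0, 0, 0, 0, 0, 0;
     0, ux, 0, 0, bx^2/ρ, (1 - bx^2)/ρ,
       By/(4*π*ρ) - 2*bx^2*bY*dp/(ρ*B), Bz/(4*π*ρ) - 2*bx^2*bz*dp/(ρ*B);
     0, 0, ux, 0, bx*bY/ρ, -(bx*bY)/ρ,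
       bx*(1 - 2*bY^2)*dp/(ρ*B) - Bx/(4*π*ρ), -(2*bx*bY*bz*dp)/(ρ*B);
     0, 0, 0, ux, bx*bz/ρ, -(bx*bz)/ρ,
       -(2*bx*bY*bz*dp)/(ρ*B), bx*(1 - 2*bz^2)*dp/(ρ*B) - Bx/(4*π*ρ);
     0, ppar*(1 + 2*bx^2), 2*ppar*bx*bY, 2*ppar*bx*bz, ux, 0, 0, 0;
     0, pperp*(2 - bx^2), -(pperp*bx*bY), -(pperp*bx*bz), 0, ux, 0, 0;
     0, By, -Bx, 0, 0, 0, ux, 0;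
     0, Bz, 0, -Bx, 0, 0, 0, ux]

open Matrix

theorem cglA_eq_smul_one_add (ρ ux ppar pperp Bx By Bz : ℝ) :
    cglA ρ ux ppar pperp Bx By Bz = ux • 1 + cglA ρ 0 ppar pperp Bx By Bz := by
  ext i j
  fin_cases i <;> fin_cases j <;> simp [cglA]

noncomputable def pressureAnisotropyWave (ppar pperp Bx By Bz : ℝ) : Fin 8 → ℝ :=
  ![0, 0, 0, 0,
    (1 - (Bx / Real.sqrt (Bx^2 + By^2 + Bz^2))^2) * (ppar - pperp),
    (Bx / Real.sqrt (Bx^2 + By^2 + Bz^2))^2 * (ppar - pperp)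
      - (Bx^2 + By^2 + Bz^2) / (4*π),
    By, Bz]

theorem cglA_zero_mulVec_pressureAnisotropyWave (ρ ppar pperp Bx By Bz : ℝ)
    (hB : Real.sqrt (Bx^2 + By^2 + Bz^2) ≠ 0) :
    cglA ρ 0 ppar pperp Bx By Bz *ᵥ pressureAnisotropyWave ppar pperp Bx By Bz = 0 := by
  have hB2 := Real.sq_sqrt (by positivity : 0 ≤ Bx^2 + By^2 + Bz^2)
  ext i
  fin_cases i <;> simp only [cglA, pressureAnisotropyWave, mulVec, dotProduct, Fin.sum_univ_eight,
    Fin.reduceFinMk, of_apply, cons_val, mul_zero, zero_mul, zero_add, Pi.zero_apply]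
  all_goals
    generalize Real.sqrt (Bx^2 + By^2 + Bz^2) = B at *
    field_simp
    rw [mul_zero, div_eq_zero_iff]
    refine Or.inl ?_
  -- the numerator of momentum row `i` is `B_x B_i (8πΔp - |B|²) (|B|² - B_x² - B_y² - B_z²)`
  · linear_combination Bx^2 * (8*π*(ppar - pperp) - B^2) * hB2
  · linear_combination Bx*By * (8*π*(ppar - pperp) - B^2) * hB2
  · linear_combination Bx*Bz * (8*π*(ppar - pperp) - B^2) * hB2

theorem pressure_anisotropy_eigenvector_general (ρ ux ppar pperp Bx By Bz : ℝ)
    (hB : 0 < Real.sqrt (Bx^2 + By^2 + Bz^2)) :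
    (cglA ρ ux ppar pperp Bx By Bz).mulVec
      ![0, 0, 0, 0,
        (1 - (Bx / Real.sqrt (Bx^2 + By^2 + Bz^2))^2) * (ppar - pperp),
        (Bx / Real.sqrt (Bx^2 + By^2 + Bz^2))^2 * (ppar - pperp)
          - (Bx^2 + By^2 + Bz^2) / (4*π),
        By, Bz]
    = ux • ![0, 0, 0, 0,
        (1 - (Bx / Real.sqrt (Bx^2 + By^2 + Bz^2))^2) * (ppar - pperp),
        (Bx / Real.sqrt (Bx^2 + By^2 + Bz^2))^2 * (ppar - pperp)
          - (Bx^2 + By^2 + Bz^2) / (4*π),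
        By, Bz] := by
  change cglA ρ ux ppar pperp Bx By Bz *ᵥ pressureAnisotropyWave ppar pperp Bx By Bz =
    ux • pressureAnisotropyWave ppar pperp Bx By Bz
  rw [cglA_eq_smul_one_add, add_mulVec, smul_mulVec, one_mulVec,
    cglA_zero_mulVec_pressureAnisotropyWave ρ ppar pperp Bx By Bz hB.ne', add_zero]

/-- The pressure-anisotropy wave eigenvector of the CGL matrix, with eigenvalue `u_x`. -/
theorem pressure_anisotropy_eigenvector (ρ ux ppar pperp Bx By Bz : ℝ)
    (hρ : 0 < ρ) (hB : 0 < Real.sqrt (Bx^2 + By^2 + Bz^2)) :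
    (cglA ρ ux ppar pperp Bx By Bz).mulVec
      ![0, 0, 0, 0,
        (1 - (Bx / Real.sqrt (Bx^2 + By^2 + Bz^2))^2) * (ppar - pperp),
        (Bx / Real.sqrt (Bx^2 + By^2 + Bz^2))^2 * (ppar - pperp)
          - (Bx^2 + By^2 + Bz^2) / (4*π),
        By, Bz]
    = ux • ![0, 0, 0, 0,
        (1 - (Bx / Real.sqrt (Bx^2 + By^2 + Bz^2))^2) * (ppar - pperp),
        (Bx / Real.sqrt (Bx^2 + By^2 + Bz^2))^2 * (ppar - pperp)
          - (Bx^2 + By^2 + Bz^2) / (4*π),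
        By, Bz] :=
  pressure_anisotropy_eigenvector_general ρ ux ppar pperp Bx By Bz hB
end

section
/- The vectors R_± = (0, 0, ±b_z sgn(B_x) α_f, ∓b_y sgn(B_x) α_f, 0, 0, -B_z, B_y)^T, where α_f = sqrt(|B|^2/(4 pi rho) - Δp/rho), are eigenvectors of the CGL quasilinear matrix A with eigenvalues u_x ± c_a, where c_a = sqrt(B_x^2/(4 pi rho) - Δp b_x^2/rho), provided |B|^2/(4 pi) - Δp > 0 and B_x ≠ 0. -/
/-!
Write the Alfvén vector as `(0, 0, b_z w, -b_y w, 0, 0, -B_z, B_y)` with a free transverse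
velocity amplitude `w`. A direct computation shows it is an eigenvector of `A` with eigenvalue
`u_x + b_x w` whenever `w² = α_f²`. Since `c_a² = b_x² α_f²`, the choice
`w = ± sgn(B_x) α_f` gives `b_x w = ± |b_x| α_f = ± c_a`.
-/

open Real

open Matrix

theorem Real.abs_eq_sign_mul (x : ℝ) : |x| = Real.sign x * x := by
  rcases lt_trichotomy x 0 with h | rfl | h
  · rw [abs_of_neg h, Real.sign_of_neg h, neg_one_mul]
  · simp
  · rw [abs_of_pos h, Real.sign_of_pos h, one_mul]

theorem Real.sign_sq_of_ne_zero {x : ℝ} (hx : x ≠ 0) : Real.sign x ^ 2 = 1 := by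
  rcases Real.sign_apply_eq_of_ne_zero x hx with h | h <;> simp [h]

noncomputable def alfvenVector (By Bz B w : ℝ) : Fin 8 → ℝ :=
  ![0, 0, Bz / B * w, -(By / B * w), 0, 0, -Bz, By]

theorem cglA_mulVec_alfvenVector {ρ ux ppar pperp Bx By Bz w : ℝ} (hρ : ρ ≠ 0)
    (hB : √(Bx^2 + By^2 + Bz^2) ≠ 0)
    (hw : w ^ 2 = (Bx^2 + By^2 + Bz^2) / (4*π*ρ) - (ppar - pperp) / ρ) :
    cglA ρ ux ppar pperp Bx By Bz *ᵥ alfvenVector By Bz √(Bx^2 + By^2 + Bz^2) w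
      = (ux + Bx / √(Bx^2 + By^2 + Bz^2) * w) • alfvenVector By Bz √(Bx^2 + By^2 + Bz^2) w := by
  have hppar : ppar = pperp + √(Bx^2 + By^2 + Bz^2) ^ 2 / (4*π) - ρ * w^2 := by
    rw [Real.sq_sqrt (by positivity), hw]
    field_simp
    ring
  -- eliminating `ppar` turns every component into an identity of rational functions
  subst hppar
  simp only [cglA]
  generalize √(Bx^2 + By^2 + Bz^2) = B at hB ⊢
  have hπ := Real.pi_ne_zero
  simp only [alfvenVector, cons_mulVec, cons_dotProduct, dotProduct_of_isEmpty, empty_mulVec,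
    head_cons, tail_cons, smul_cons, smul_empty, smul_eq_mul, vecCons_inj, and_true]
  refine ⟨?_, ?_, ?_, ?_, ?_, ?_, ?_, ?_⟩ <;> field_simp <;> ring

theorem cgl_alfven_speed_eq_abs_mul_sqrt {ρ ppar pperp Bx By Bz : ℝ} (hB : √(Bx^2 + By^2 + Bz^2) ≠ 0) :
    √(Bx^2/(4*π*ρ) - (ppar - pperp) * (Bx / √(Bx^2 + By^2 + Bz^2))^2 / ρ)
      = |Bx / √(Bx^2 + By^2 + Bz^2)| * √((Bx^2 + By^2 + Bz^2)/(4*π*ρ) - (ppar - pperp)/ρ) := by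
  have hB2 : √(Bx^2 + By^2 + Bz^2) ^ 2 = Bx^2 + By^2 + Bz^2 := Real.sq_sqrt (by positivity)
  rw [← Real.sqrt_sq_eq_abs, ← Real.sqrt_mul (sq_nonneg _)]
  congr 1
  field_simp
  rw [hB2]

/-- The Alfvén eigenvectors of the CGL matrix, with eigenvalues `u_x ± c_a`. -/
theorem alfven_eigenvectors (ρ ux ppar pperp Bx By Bz : ℝ)
    (hρ : 0 < ρ) (hB : 0 < Real.sqrt (Bx^2 + By^2 + Bz^2))
    (hfire : 0 < (Bx^2 + By^2 + Bz^2) / (4*π) - (ppar - pperp))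
    (hBx : Bx ≠ 0) :
    ∀ s : ℝ, s = 1 ∨ s = -1 →
    (cglA ρ ux ppar pperp Bx By Bz).mulVec
      ![0, 0,
        s * (Bz / Real.sqrt (Bx^2 + By^2 + Bz^2)) * Real.sign Bx
          * Real.sqrt ((Bx^2 + By^2 + Bz^2)/(4*π*ρ) - (ppar - pperp)/ρ),
        -(s * (By / Real.sqrt (Bx^2 + By^2 + Bz^2)) * Real.sign Bx
          * Real.sqrt ((Bx^2 + By^2 + Bz^2)/(4*π*ρ) - (ppar - pperp)/ρ)),
        0, 0, -Bz, By]
    = (ux + s * Real.sqrt (Bx^2/(4*π*ρ)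
          - (ppar - pperp) * (Bx / Real.sqrt (Bx^2 + By^2 + Bz^2))^2 / ρ)) •
      ![0, 0,
        s * (Bz / Real.sqrt (Bx^2 + By^2 + Bz^2)) * Real.sign Bx
          * Real.sqrt ((Bx^2 + By^2 + Bz^2)/(4*π*ρ) - (ppar - pperp)/ρ),
        -(s * (By / Real.sqrt (Bx^2 + By^2 + Bz^2)) * Real.sign Bx
          * Real.sqrt ((Bx^2 + By^2 + Bz^2)/(4*π*ρ) - (ppar - pperp)/ρ)),
        0, 0, -Bz, By] := by
  intro s hs
  set B := √(Bx^2 + By^2 + Bz^2)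
  set α := √((Bx^2 + By^2 + Bz^2)/(4*π*ρ) - (ppar - pperp)/ρ)
  have hα : α ^ 2 = (Bx^2 + By^2 + Bz^2)/(4*π*ρ) - (ppar - pperp)/ρ := by
    refine Real.sq_sqrt ?_
    rw [← div_div, ← sub_div]
    positivity
  have hs2 : s ^ 2 = 1 := by rcases hs with rfl | rfl <;> norm_num
  have hv : alfvenVector By Bz B (s * Real.sign Bx * α)
      = ![0, 0, s * (Bz / B) * Real.sign Bx * α, -(s * (By / B) * Real.sign Bx * α), 0, 0, -Bz, By] := by
    simp only [alfvenVector, vecCons_inj, true_and, and_true]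
    constructor <;> ring
  have hspeed : s * √(Bx^2/(4*π*ρ) - (ppar - pperp) * (Bx / B)^2 / ρ) = Bx / B * (s * Real.sign Bx * α) := by
    rw [cgl_alfven_speed_eq_abs_mul_sqrt hB.ne', abs_div, abs_of_pos hB, Real.abs_eq_sign_mul]
    ring
  rw [hspeed, ← hv]
  refine cglA_mulVec_alfvenVector hρ.ne' hB.ne' ?_
  rw [mul_pow, mul_pow, hs2, Real.sign_sq_of_ne_zero hBx, hα, one_mul, one_mul]
end
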